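/- Let H be the disjoint union of s cliques of sizes y_1 ≥ y_2 ≥ … ≥ y_s ≥ 1. Then ρ(H) = Σ_{i=1}^{s} i·y_i. -/

import Mathlib

/-- `ArrowsR G H` (written `G →r H`) means: every proper vertex coloring of `G`
contains a rainbow induced subgraph isomorphic to `H`, i.e. an induced copy of `H`
(a graph embedding) whose vertices receive pairwise distinct colors. -/
def ArrowsR {α β : Type} (G : SimpleGraph α) (H : SimpleGraph β) : Prop :=
  ∀ c : α → ℕ, (∀ u v : α, G.Adj u v → c u ≠ c v) →
    ∃ f : H ↪g G, Function.Injective fun h => c (f h)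

/-- `rho H` is the minimum number of vertices of a graph `G` with `G →r H`. -/
noncomputable def rho {β : Type} (H : SimpleGraph β) : ℕ :=
  sInf {m : ℕ | ∃ G : SimpleGraph (Fin m), ArrowsR G H}

/-!
Upper bound: let `G` be the disjoint union of cliques of sizes `T i = y i + y (i+1) + ⋯`, which
has `∑ (i+1) * y i` vertices. A proper colouring makes every clique rainbow, so going from the
last clique to the first one can pick `y i` vertices of clique `i` with colours unused so far.

Lower bound: give a profile `z` of clique sizes the weight `∑_{i ≤ j} min (z i) (z j)`, which is
`∑ (i+1) * y i` when `y` is non-increasing. Suppose every proper colouring of `G[A]` contains a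
rainbow induced union of cliques of weight `≥ k`, and colour a maximum independent set `I ⊆ A`
with a fresh colour. A rainbow copy then meets `I` in at most one vertex, and one vertex from each
of its nonempty cliques forms an independent set, so it has at most `#I` nonempty cliques; deleting
the vertex in `I` lowers the weight by at most `#I`. So `G[A \ I]` has the same property for
`k - #I`, and induction on `#A` gives `k ≤ #A`.
-/

open Finset SimpleGraph

section CliqueWeight

variable {ι : Type*} [Fintype ι] [LinearOrder ι] [LocallyFiniteOrderTop ι]

def cliqueWeight (z : ι → ℕ) : ℕ := ∑ i, ∑ j ∈ Ici i, min (z i) (z j)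

lemma cliqueWeight_le_update_add (z : ι → ℕ) {i₀ : ι} (h : 0 < z i₀) :
    cliqueWeight z ≤ cliqueWeight (Function.update z i₀ (z i₀ - 1)) + #{k | 0 < z k} := by
  set z' := Function.update z i₀ (z i₀ - 1)
  set pairs := univ.sigma fun i : ι => Ici i
  let hits := pairs.filter fun p => (p.1 = i₀ ∨ p.2 = i₀) ∧ 0 < z p.1 ∧ 0 < z p.2
  have hpair (p) (hp : p ∈ pairs) :
      min (z p.1) (z p.2) ≤ min (z' p.1) (z' p.2) + if p ∈ hits then 1 else 0 := by
    obtain ⟨i, j⟩ := p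
    by_cases hi : i = i₀ <;> by_cases hj : j = i₀ <;> subst_vars <;> simp [z', hits, *] <;>
      (try split_ifs) <;> omega
  -- each `k` with `0 < z k` is hit only by the pair `(min k i₀, max k i₀)`
  have hhits : #hits ≤ #{k | 0 < z k} := by
    refine card_le_card_of_injOn (fun p => if p.1 = i₀ then p.2 else p.1) ?_ ?_
    · rintro ⟨i, j⟩ hp
      simp only [hits, pairs, coe_filter, mem_sigma, mem_univ, mem_Ici, true_and] at hp
      simp only [coe_filter, mem_univ, true_and]
      grind
    · rintro ⟨i, j⟩ hp ⟨i', j'⟩ hp' heq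
      simp only [hits, pairs, coe_filter, mem_sigma, mem_univ, mem_Ici, true_and] at hp hp'
      grind
  calc cliqueWeight z
      = ∑ p ∈ pairs, min (z p.1) (z p.2) := sum_sigma' _ _ _
    _ ≤ ∑ p ∈ pairs, (min (z' p.1) (z' p.2) + if p ∈ hits then 1 else 0) := sum_le_sum hpair
    _ = cliqueWeight z' + #hits := by
      rw [sum_add_distrib, cliqueWeight, sum_sigma', sum_boole, Nat.cast_id, filter_mem_eq_inter,
        inter_eq_right.2 (filter_subset _ _)]
    _ ≤ _ := by gcongr

lemma cliqueWeight_card_le_update_erase {V : Type*} [DecidableEq V]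
    {W : ι → Finset V} {i₀ : ι} {x : V} (hx : x ∈ W i₀) :
    (cliqueWeight fun i => #(W i)) ≤
      (cliqueWeight fun i => #(Function.update W i₀ ((W i₀).erase x) i)) +
        #{i | 0 < #(W i)} := by
  have hcard : (fun i => #(Function.update W i₀ ((W i₀).erase x) i)) =
      Function.update (fun i => #(W i)) i₀ (#(W i₀) - 1) := by
    ext i
    rcases eq_or_ne i i₀ with rfl | hi
    · simp [card_erase_of_mem hx]
    · simp [hi]
  rw [hcard]
  exact cliqueWeight_le_update_add _ (card_pos.2 ⟨x, hx⟩)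

end CliqueWeight

lemma sum_sum_Ici_eq {s : ℕ} (y : Fin s → ℕ) :
    ∑ i, ∑ j ∈ Ici i, y j = ∑ j : Fin s, ((j : ℕ) + 1) * y j := by
  rw [sum_comm' (t' := univ) (s' := Iic) (by simp)]
  simp [Fin.card_Iic]

lemma cliqueWeight_of_antitone {s : ℕ} {y : Fin s → ℕ} (hy : Antitone y) :
    cliqueWeight y = ∑ j : Fin s, ((j : ℕ) + 1) * y j := by
  rw [← sum_sum_Ici_eq, cliqueWeight]
  exact sum_congr rfl fun i _ => sum_congr rfl fun j hj => min_eq_right (hy (mem_Ici.1 hj))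

namespace SimpleGraph

variable {ι : Type*} {V W : ι → Type*}

lemma compl_completeMultipartiteGraph_adj {a b : Σ i, V i} :
    (completeMultipartiteGraph V)ᶜ.Adj a b ↔ a.1 = b.1 ∧ a ≠ b := by
  simp [and_comm]

def Embedding.complCompleteMultipartiteGraph (g : ∀ i, V i ↪ W i) :
    (completeMultipartiteGraph V)ᶜ ↪g (completeMultipartiteGraph W)ᶜ where
  toEmbedding := (Function.Embedding.refl ι).sigmaMap g
  map_rel_iff' {a b} := by
    simp only [compl_completeMultipartiteGraph_adj, ne_eq, EmbeddingLike.apply_eq_iff_eq]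
    rfl

end SimpleGraph

lemma ArrowsR.of_iso {α α' β : Type} {G : SimpleGraph α} {G' : SimpleGraph α'}
    {H : SimpleGraph β} (h : ArrowsR G H) (e : G ≃g G') : ArrowsR G' H := by
  intro c hc
  obtain ⟨f, hf⟩ := h (c ∘ e) fun u v huv => hc _ _ (e.map_adj_iff.2 huv)
  exact ⟨e.toEmbedding.comp f, hf⟩

open Function in
theorem exists_disjoint_subsets_card_eq {α : Type*} [DecidableEq α] {n : ℕ}
    (D : Fin n → Finset α) (y : Fin n → ℕ) (hD : ∀ i, ∑ j ∈ Ici i, y j ≤ #(D i)) :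
    ∃ C : Fin n → Finset α,
      (∀ i, C i ⊆ D i) ∧ (∀ i, #(C i) = y i) ∧ Pairwise (Disjoint on C) := by
  induction n with
  | zero => exact ⟨fun _ => ∅, finZeroElim, finZeroElim, fun i => i.elim0⟩
  | succ n ih =>
    obtain ⟨C, hCD, hCcard, hCdisj⟩ := ih (D ∘ Fin.succ) (y ∘ Fin.succ)
      fun i => by simpa [← Fin.map_succEmb_Ici, sum_map] using hD i.succ
    have hfree : y 0 ≤ #(D 0 \ univ.biUnion C) := by
      have hused : #(univ.biUnion C) ≤ ∑ i : Fin n, y i.succ :=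
        card_biUnion_le.trans_eq (by simp [hCcard])
      have := hD 0
      simp only [Ici_zero_eq_univ, Fin.sum_univ_succ] at this
      have := le_card_sdiff (univ.biUnion C) (D 0)
      omega
    obtain ⟨C₀, hC₀, hC₀card⟩ := exists_subset_card_eq hfree
    refine ⟨Fin.cons C₀ C, Fin.cases (hC₀.trans sdiff_subset) hCD,
      Fin.cases hC₀card hCcard, ?_⟩
    have hC₀C (j : Fin n) : Disjoint C₀ (C j) := disjoint_of_subset_left hC₀
      (disjoint_sdiff_self_left.mono_right (subset_biUnion_of_mem C (mem_univ j)))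
    intro i j hij
    induction i using Fin.cases <;> induction j using Fin.cases
    · exact absurd rfl hij
    · exact hC₀C _
    · exact (hC₀C _).symm
    · exact hCdisj (Fin.succ_injective _ |>.ne_iff.1 hij)

theorem arrowsR_compl_completeMultipartiteGraph {s : ℕ} (y T : Fin s → ℕ)
    (hT : ∀ i, ∑ j ∈ Ici i, y j ≤ T i) :
    ArrowsR (completeMultipartiteGraph fun i => Fin (T i))ᶜ
      (completeMultipartiteGraph fun i => Fin (y i))ᶜ := by
  intro c hc
  have hinj (i : Fin s) : Function.Injective fun a : Fin (T i) => c ⟨i, a⟩ := by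
    intro a b hab
    by_contra hne
    exact hc ⟨i, a⟩ ⟨i, b⟩
      (compl_completeMultipartiteGraph_adj.2 ⟨rfl, by simpa using hne⟩) hab
  obtain ⟨C, hCD, hCcard, hCdisj⟩ := exists_disjoint_subsets_card_eq
    (fun i => univ.image fun a => c ⟨i, a⟩) y
    (by simpa [card_image_of_injective _ (hinj _)] using hT)
  have hQ (i : Fin s) : #{a | c ⟨i, a⟩ ∈ C i} = y i := by
    rw [← hCcard i, ← card_image_of_injective _ (hinj i), ← filter_image (p := (· ∈ C i)),
      filter_mem_eq_inter, inter_eq_right.2 (hCD i)]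
  refine ⟨Embedding.complCompleteMultipartiteGraph fun i =>
    (orderEmbOfFin _ (hQ i)).toEmbedding, ?_⟩
  rintro ⟨i, a⟩ ⟨j, b⟩ hab
  change c ⟨i, orderEmbOfFin _ (hQ i) a⟩ = c ⟨j, orderEmbOfFin _ (hQ j) b⟩ at hab
  have hcol (i : Fin s) (a : Fin (y i)) : c ⟨i, orderEmbOfFin _ (hQ i) a⟩ ∈ C i :=
    (mem_filter.1 (orderEmbOfFin_mem _ (hQ i) a)).2
  obtain rfl : i = j := by
    by_contra hij
    exact Finset.disjoint_left.1 (hCdisj hij) (hcol i a) (hab ▸ hcol j b)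
  simpa using (orderEmbOfFin _ (hQ i)).injective (hinj i hab)

theorem exists_arrowsR_compl_completeMultipartiteGraph {s : ℕ} (y : Fin s → ℕ) :
    ∃ G : SimpleGraph (Fin (∑ i : Fin s, ((i : ℕ) + 1) * y i)),
      ArrowsR G (completeMultipartiteGraph fun i => Fin (y i))ᶜ := by
  set T : Fin s → ℕ := fun i => ∑ j ∈ Ici i, y j
  have hcard : Fintype.card (Σ i, Fin (T i)) = ∑ i : Fin s, ((i : ℕ) + 1) * y i := by
    simp [T, sum_sum_Ici_eq]
  exact ⟨_, (arrowsR_compl_completeMultipartiteGraph y T fun _ => le_rfl).of_iso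
    ((completeMultipartiteGraph _)ᶜ.overFinIso hcard)⟩

lemma SimpleGraph.exists_isIndepSet_subset_card_max {V : Type*} (G : SimpleGraph V)
    (A : Finset V) : ∃ I ⊆ A, G.IsIndepSet I ∧ ∀ J ⊆ A, G.IsIndepSet J → #J ≤ #I := by
  classical
  obtain ⟨I, hI, hmax⟩ :=
    exists_max_image (A.powerset.filter fun J : Finset V => G.IsIndepSet (J : Set V)) card
      ⟨∅, by simp⟩
  simp only [mem_filter, mem_powerset] at hI hmax
  exact ⟨I, hI.1, hI.2, fun J hJA hJ => hmax J ⟨hJA, hJ⟩⟩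

section RainbowCliques

variable {V ι : Type*} (G : SimpleGraph V)

structure IsRainbowCliqueFamily (c : V → ℕ) (W : ι → Finset V) : Prop where
  adj_iff {i j : ι} {u v : V} : u ∈ W i → v ∈ W j → u ≠ v → (G.Adj u v ↔ i = j)
  eq_of_color_eq {i j : ι} {u v : V} : u ∈ W i → v ∈ W j → c u = c v → i = j ∧ u = v

namespace IsRainbowCliqueFamily

variable {G} {c c' : V → ℕ} {W W' : ι → Finset V}

lemma mono (h : IsRainbowCliqueFamily G c W) (hW : ∀ i, W' i ⊆ W i) :
    IsRainbowCliqueFamily G c W' where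
  adj_iff hu hv := h.adj_iff (hW _ hu) (hW _ hv)
  eq_of_color_eq hu hv := h.eq_of_color_eq (hW _ hu) (hW _ hv)

lemma congr (h : IsRainbowCliqueFamily G c W) (hc : ∀ i, ∀ v ∈ W i, c v = c' v) :
    IsRainbowCliqueFamily G c' W where
  adj_iff := h.adj_iff
  eq_of_color_eq hu hv huv := h.eq_of_color_eq hu hv (by rw [hc _ _ hu, hc _ _ hv, huv])

lemma exists_isIndepSet [Fintype ι] [DecidableEq V] (h : IsRainbowCliqueFamily G c W) :
    ∃ T ⊆ univ.biUnion W, G.IsIndepSet T ∧ #T = #{i | 0 < #(W i)} := by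
  set F : Finset ι := {i | 0 < #(W i)}
  have hne (i : ι) (hi : i ∈ F) : (W i).Nonempty := card_pos.1 (mem_filter.1 hi).2
  choose rep hrep using hne
  let r (i : F) : V := rep i.1 i.2
  have hr_inj : Function.Injective r :=
    fun i j hij => Subtype.ext (h.eq_of_color_eq (hrep i.1 i.2) (hrep j.1 j.2) (congrArg c hij)).1
  refine ⟨univ.image r, ?_, ?_, ?_⟩
  · simp only [subset_iff, mem_image, mem_biUnion]
    rintro _ ⟨i, -, rfl⟩
    exact ⟨i.1, mem_univ _, hrep _ _⟩
  · simp only [coe_image, coe_univ, Set.image_univ]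
    rintro _ ⟨i, rfl⟩ _ ⟨j, rfl⟩ hij hadj
    exact hij (congrArg r (Subtype.ext ((h.adj_iff (hrep _ _) (hrep _ _) hij).1 hadj)))
  · rw [card_image_of_injective _ hr_inj, card_univ, Fintype.card_coe]

end IsRainbowCliqueFamily

-- Cliques may be empty, so deleting vertices from a copy leaves a copy indexed by the same `ι`.
def ForcesRainbowCliques (ι : Type*) [Fintype ι] [LinearOrder ι] [LocallyFiniteOrderTop ι]
    (A : Finset V) (k : ℕ) : Prop :=
  ∀ c : V → ℕ, (∀ u ∈ A, ∀ v ∈ A, G.Adj u v → c u ≠ c v) →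
    ∃ W : ι → Finset V, (∀ i, W i ⊆ A) ∧ IsRainbowCliqueFamily G c W ∧
      k ≤ cliqueWeight fun i => #(W i)

variable {G} [DecidableEq V]

lemma properOn_ite_of_isIndepSet {A I : Finset V} (hI : G.IsIndepSet I) {c : V → ℕ}
    (hc : ∀ u ∈ A \ I, ∀ v ∈ A \ I, G.Adj u v → c u ≠ c v) {N : ℕ}
    (hN : ∀ v ∈ A \ I, c v < N) :
    ∀ u ∈ A, ∀ v ∈ A, G.Adj u v →
      (if u ∈ I then N else c u) ≠ (if v ∈ I then N else c v) := by
  intro u hu v hv huv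
  by_cases huI : u ∈ I <;> by_cases hvI : v ∈ I <;> simp only [huI, hvI, if_true, if_false]
  · exact absurd huv (hI huI hvI (G.ne_of_adj huv))
  · exact (hN v (mem_sdiff.2 ⟨hv, hvI⟩)).ne'
  · exact (hN u (mem_sdiff.2 ⟨hu, huI⟩)).ne
  · exact hc u (mem_sdiff.2 ⟨hu, huI⟩) v (mem_sdiff.2 ⟨hv, hvI⟩) huv

variable [Fintype ι] [LinearOrder ι] [LocallyFiniteOrderTop ι]

lemma ForcesRainbowCliques.sdiff {A I : Finset V} {k : ℕ} (h : ForcesRainbowCliques G ι A k)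
    (hI : G.IsIndepSet I) (hmax : ∀ J ⊆ A, G.IsIndepSet J → #J ≤ #I) :
    ForcesRainbowCliques G ι (A \ I) (k - #I) := by
  intro c hc
  set fresh := (A \ I).sup c + 1
  let d v := if v ∈ I then fresh else c v
  obtain ⟨W, hWA, hW, hk⟩ := h d <| properOn_ite_of_isIndepSet hI hc
    fun v hv => Nat.lt_succ_of_le (le_sup hv)
  by_cases hx : ∀ i, ∀ v ∈ W i, v ∉ I
  · exact ⟨W, fun i v hv => mem_sdiff.2 ⟨hWA i hv, hx i v hv⟩,
      hW.congr fun i v hv => by simp [d, hx i v hv], by omega⟩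
  obtain ⟨i₀, x, hxW, hxI⟩ : ∃ i, ∃ x ∈ W i, x ∈ I := by simpa using hx
  -- all of `I` has colour `fresh`, so `x` is the only vertex of the copy in `I`
  have hx_unique : ∀ i, ∀ v ∈ W i, v ∈ I → i = i₀ ∧ v = x :=
    fun i v hv hvI => hW.eq_of_color_eq hv hxW (by simp [d, hvI, hxI])
  have hweight := cliqueWeight_card_le_update_erase hxW
  set W' := Function.update W i₀ ((W i₀).erase x)
  have hW'W (i : ι) : W' i ⊆ W i := by
    rcases eq_or_ne i i₀ with rfl | hi
    · simpa [W'] using erase_subset x (W i)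
    · simp [W', hi]
  have hW'I (i : ι) (v : V) (hv : v ∈ W' i) : v ∉ I := by
    intro hvI
    obtain ⟨rfl, rfl⟩ := hx_unique i v (hW'W i hv) hvI
    simp [W'] at hv
  have hparts : #{i | 0 < #(W i)} ≤ #I := by
    obtain ⟨T, hTW, hT, hTcard⟩ := hW.exists_isIndepSet
    exact hTcard ▸ hmax T (hTW.trans (biUnion_subset.2 fun i _ => hWA i)) hT
  exact ⟨W', fun i v hv => mem_sdiff.2 ⟨hWA i (hW'W i hv), hW'I i v hv⟩,
    (hW.mono hW'W).congr fun i v hv => by simp [d, hW'I i v hv], by omega⟩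

lemma ForcesRainbowCliques.le_card {A : Finset V} {k : ℕ} (h : ForcesRainbowCliques G ι A k) :
    k ≤ #A := by
  induction A using Finset.strongInduction generalizing k with
  | H A ih =>
  rcases A.eq_empty_or_nonempty with rfl | ⟨a, ha⟩
  · obtain ⟨W, hW, -, hk⟩ := h (fun _ => 0) (by simp)
    simpa [cliqueWeight, subset_empty.1 (hW _)] using hk
  obtain ⟨I, hIA, hI, hmax⟩ := G.exists_isIndepSet_subset_card_max A
  have hIpos : 0 < #I := by simpa using hmax {a} (by simpa) (by simp)
  have := ih (A \ I) (sdiff_ssubset hIA (card_pos.1 hIpos)) (h.sdiff hI hmax)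
  have := card_le_card hIA
  rw [card_sdiff_of_subset hIA] at *
  omega

end RainbowCliques

lemma forcesRainbowCliques_of_arrowsR {V ι : Type} [Fintype V] [DecidableEq V] [Fintype ι]
    [LinearOrder ι] [LocallyFiniteOrderTop ι] {G : SimpleGraph V} {y : ι → ℕ}
    (h : ArrowsR G (completeMultipartiteGraph fun i => Fin (y i))ᶜ) :
    ForcesRainbowCliques G ι univ (cliqueWeight y) := by
  intro c hc
  obtain ⟨f, hf⟩ := h c fun u v => hc u (mem_univ u) v (mem_univ v)
  refine ⟨fun i => univ.map ((Function.Embedding.sigmaMk i).trans f.toEmbedding),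
    fun _ => subset_univ _, ⟨?_, ?_⟩, by simp⟩
  · simp only [mem_map, mem_univ, true_and, Function.Embedding.trans_apply]
    rintro i j _ _ ⟨a, rfl⟩ ⟨b, rfl⟩ hne
    exact (f.map_adj_iff.trans compl_completeMultipartiteGraph_adj).trans
      ⟨And.left, fun hij => ⟨hij, fun hab => hne (congrArg f hab)⟩⟩
  · simp only [mem_map, mem_univ, true_and, Function.Embedding.trans_apply]
    rintro i j _ _ ⟨a, rfl⟩ ⟨b, rfl⟩ hab
    have := hf hab
    exact ⟨congrArg Sigma.fst this, congrArg f this⟩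

theorem stmt12_general (s : ℕ) (y : Fin s → ℕ)
    (hmono : ∀ i j : Fin s, i ≤ j → y j ≤ y i) :
    rho (SimpleGraph.completeMultipartiteGraph fun i : Fin s => Fin (y i))ᶜ =
      ∑ i : Fin s, ((i : ℕ) + 1) * y i := by
  obtain ⟨G, hG⟩ := exists_arrowsR_compl_completeMultipartiteGraph y
  refine le_antisymm (Nat.sInf_le ⟨G, hG⟩) (le_csInf ⟨_, G, hG⟩ ?_)
  rintro m ⟨G', hG'⟩
  calc ∑ i : Fin s, ((i : ℕ) + 1) * y i = cliqueWeight y :=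
        (cliqueWeight_of_antitone fun i j hij => hmono i j hij).symm
    _ ≤ #(univ : Finset (Fin m)) := (forcesRainbowCliques_of_arrowsR hG').le_card
    _ = m := card_fin m

/-- For `H` the disjoint union of `s` cliques of sizes `y 0 ≥ y 1 ≥ … ≥ y (s-1) ≥ 1`
(the complement of the complete multipartite graph with these class sizes):
`ρ(H) = Σ_{i=1}^{s} i·y_i`. -/
theorem stmt12 (s : ℕ) (y : Fin s → ℕ) (hy1 : ∀ i, 1 ≤ y i)
    (hmono : ∀ i j : Fin s, i ≤ j → y j ≤ y i) :
    rho (SimpleGraph.completeMultipartiteGraph fun i : Fin s => Fin (y i))ᶜ =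
      ∑ i : Fin s, ((i : ℕ) + 1) * y i :=
  stmt12_general s y hmono
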